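/- For every m ∈ {3, 6}, the injective chromatic number of the direct product of cycles satisfies χ_i(C_m × C_3) = 9. -/

import Mathlib

open SimpleGraph Finset

variable {α β : Type*}

/-- The direct (tensor) product of two simple graphs. -/
def directProd (G : SimpleGraph α) (H : SimpleGraph β) : SimpleGraph (α × β) where
  Adj x y := G.Adj x.1 y.1 ∧ H.Adj x.2 y.2
  symm := ⟨fun x y h => ⟨h.1.symm, h.2.symm⟩⟩
  loopless := ⟨fun x h => G.loopless.1 x.1 h.1⟩

/-- The strong product of two simple graphs. -/
def strongProd (G : SimpleGraph α) (H : SimpleGraph β) : SimpleGraph (α × β) where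
  Adj x y := (x.1 = y.1 ∧ H.Adj x.2 y.2) ∨ (G.Adj x.1 y.1 ∧ x.2 = y.2) ∨
    (G.Adj x.1 y.1 ∧ H.Adj x.2 y.2)
  symm := by
    refine ⟨?_⟩
    rintro x y (⟨h1, h2⟩ | ⟨h1, h2⟩ | ⟨h1, h2⟩)
    · exact Or.inl ⟨h1.symm, h2.symm⟩
    · exact Or.inr (Or.inl ⟨h1.symm, h2.symm⟩)
    · exact Or.inr (Or.inr ⟨h1.symm, h2.symm⟩)
  loopless := by
    refine ⟨?_⟩
    rintro x (⟨_, h⟩ | ⟨h, _⟩ | ⟨h, _⟩)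
    · exact H.loopless.1 _ h
    · exact G.loopless.1 _ h
    · exact G.loopless.1 _ h

/-- The lexicographic product of two simple graphs. -/
def lexProd (G : SimpleGraph α) (H : SimpleGraph β) : SimpleGraph (α × β) where
  Adj x y := G.Adj x.1 y.1 ∨ (x.1 = y.1 ∧ H.Adj x.2 y.2)
  symm := by
    refine ⟨?_⟩
    rintro x y (h | ⟨h1, h2⟩)
    · exact Or.inl h.symm
    · exact Or.inr ⟨h1.symm, h2.symm⟩
  loopless := by
    refine ⟨?_⟩
    rintro x (h | ⟨_, h⟩)
    · exact G.loopless.1 _ h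
    · exact H.loopless.1 _ h

/-- The corona product `G ⊙ H`: vertex `(v, none)` is the vertex `v` of `G`, and
`(v, some h)` is the vertex `h` of the copy of `H` attached at `v`. -/
def corona (G : SimpleGraph α) (H : SimpleGraph β) : SimpleGraph (α × Option β) where
  Adj x y :=
    (x.2 = none ∧ y.2 = none ∧ G.Adj x.1 y.1) ∨
    (x.1 = y.1 ∧ x.2 = none ∧ y.2 ≠ none) ∨
    (x.1 = y.1 ∧ x.2 ≠ none ∧ y.2 = none) ∨
    (x.1 = y.1 ∧ ∃ a b, x.2 = some a ∧ y.2 = some b ∧ H.Adj a b)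
  symm := by
    refine ⟨?_⟩
    rintro x y (⟨h1, h2, h3⟩ | ⟨h1, h2, h3⟩ | ⟨h1, h2, h3⟩ | ⟨h1, a, b, h2, h3, h4⟩)
    · exact Or.inl ⟨h2, h1, h3.symm⟩
    · exact Or.inr (Or.inr (Or.inl ⟨h1.symm, h3, h2⟩))
    · exact Or.inr (Or.inl ⟨h1.symm, h3, h2⟩)
    · exact Or.inr (Or.inr (Or.inr ⟨h1.symm, b, a, h3, h2, h4.symm⟩))
  loopless := by
    refine ⟨?_⟩
    rintro x (⟨_, _, h⟩ | ⟨_, h1, h2⟩ | ⟨_, h1, h2⟩ | ⟨_, a, b, h2, h3, h4⟩)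
    · exact G.loopless.1 _ h
    · exact h2 h1
    · exact h1 h2
    · rw [h2] at h3
      injection h3 with h5
      subst h5
      exact H.loopless.1 _ h4

/-- `f` is an injective coloring of `G`: no vertex has two distinct neighbors
with the same color. -/
def IsInjColoring {V : Type*} (G : SimpleGraph V) {n : ℕ} (f : V → Fin n) : Prop :=
  ∀ v u w, G.Adj v u → G.Adj v w → u ≠ w → f u ≠ f w

/-- The injective chromatic number: the least `n` such that `G` admits an
injective coloring with `n` colors. -/
noncomputable def injChrom {V : Type*} (G : SimpleGraph V) : ℕ :=
  sInf {n | ∃ f : V → Fin n, IsInjColoring G f}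

/-- `f` is a 2-distance coloring of `G`: distinct vertices at distance at most
two get distinct colors. -/
def IsDistTwoColoring {V : Type*} (G : SimpleGraph V) {n : ℕ} (f : V → Fin n) : Prop :=
  ∀ u v, u ≠ v → (G.Adj u v ∨ ∃ w, G.Adj u w ∧ G.Adj w v) → f u ≠ f v

/-- The 2-distance chromatic number of `G`. -/
noncomputable def distTwoChrom {V : Type*} (G : SimpleGraph V) : ℕ :=
  sInf {n | ∃ f : V → Fin n, IsDistTwoColoring G f}


instance {G : SimpleGraph α} {H : SimpleGraph β} [DecidableRel G.Adj] [DecidableRel H.Adj] :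
    DecidableRel (directProd G H).Adj :=
  fun x y => inferInstanceAs (Decidable (G.Adj x.1 y.1 ∧ H.Adj x.2 y.2))

lemma injChrom_lower_aux {V : Type*} [Fintype V] {G : SimpleGraph V} {n : ℕ}
    (g : Fin 9 → V) (hg : Function.Injective g)
    (hcn : ∀ i j : Fin 9, i ≠ j → ∃ v, G.Adj v (g i) ∧ G.Adj v (g j))
    (f : V → Fin n) (hf : IsInjColoring G f) : 9 ≤ n := by
  have hinj : Function.Injective (f ∘ g) := by
    intro i j h
    by_contra hij
    obtain ⟨v, h1, h2⟩ := hcn i j hij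
    exact hf v (g i) (g j) h1 h2 (fun e => hij (hg e)) h
  simpa using Fintype.card_le_of_injective _ hinj

/-- for `m ∈ {3, 6}`, `χ_i(C_m × C_3) = 9`. -/
theorem injChrom_directProd_cycles_nine (m : ℕ) (hm : m ∈ ({3, 6} : Set ℕ)) :
    injChrom (directProd (cycleGraph m) (cycleGraph 3)) = 9 := by
  rcases hm with rfl | rfl
  · apply le_antisymm
    · apply Nat.sInf_le
      refine ⟨fun v => ⟨3 * v.1.val + v.2.val, by have := v.1.isLt; have := v.2.isLt; omega⟩, ?_⟩
      unfold IsInjColoring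
      decide
    · refine le_csInf ⟨9, fun v => ⟨3 * v.1.val + v.2.val,
        by have := v.1.isLt; have := v.2.isLt; omega⟩, by unfold IsInjColoring; decide⟩ ?_
      rintro n ⟨f, hf⟩
      refine injChrom_lower_aux
        (fun i => (⟨i.val / 3, by have := i.isLt; omega⟩, ⟨i.val % 3, by omega⟩)) ?_ ?_ f hf
      · decide
      · decide
  · apply le_antisymm
    · apply Nat.sInf_le
      refine ⟨fun v => ⟨3 * (v.1.val / 2) + v.2.val,
        by have := v.1.isLt; have := v.2.isLt; omega⟩, ?_⟩
      unfold IsInjColoring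
      decide
    · refine le_csInf ⟨9, fun v => ⟨3 * (v.1.val / 2) + v.2.val,
        by have := v.1.isLt; have := v.2.isLt; omega⟩, by unfold IsInjColoring; decide⟩ ?_
      rintro n ⟨f, hf⟩
      refine injChrom_lower_aux
        (fun i => (⟨2 * (i.val / 3), by have := i.isLt; omega⟩, ⟨i.val % 3, by omega⟩)) ?_ ?_ f hf
      · decide
      · decide
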